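/- arXiv:1608.06121 — 3 statements merged into one kernel-verified Lean document; each statement's English description precedes it below -/
import Mathlib

section
/- Let b ∈ ℝ, let τ be a stopping time, and let φ be a trading strategy for the market-weight semimartingale μ taking values in Δᵈ. Define ψᵢ(t) = b + (φᵢ(t) − V^φ(τ)) 1_{t ≥ τ}. Then ψ is itself a trading strategy (self-financing), and its wealth satisfies V^ψ(t) = b + (V^φ(t) − V^φ(τ)) 1_{t ≥ τ}. -/
/-!
Expanding `ψ` coordinatewise, the constant part `b` contributes `b · ∑ᵢ μᵢ = b` to the wealth and
nothing to the gains (`∑ᵢ dμᵢ = 0`), the constant `-V^φ(τ)` switched on at `τ` contributes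
`-V^φ(τ) 1_{t ≥ τ}` to the wealth and again nothing to the gains, and `φ` switched on at `τ` has
gains `(g φ t - g φ τ) 1_{t ≥ τ}`. Both claims then follow from the self-financing identity of `φ`
at `t` and at `τ`; at `t = 0` one needs `τ ≥ 0`, so that `1_{0 ≥ τ}` only fires when `τ = 0`.
-/

open Finset

section Concatenation

variable {ι T : Type*}

theorem sum_affine_mul_of_sum_eq_one [Fintype ι] {w x : ι → ℝ} (hw : ∑ i, w i = 1) (b c e : ℝ) :
    ∑ i, (b + (x i - c) * e) * w i = b + ((∑ i, x i * w i) - c) * e := by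
  have hterm i : (b + (x i - c) * e) * w i = b * w i + e * (x i * w i) - c * e * w i := by ring
  simp only [hterm, sum_sub_distrib, sum_add_distrib, ← mul_sum, hw]
  ring

theorem gains_concat_eq [LinearOrder T] (g : (T → ι → ℝ) → T → ℝ)
    (hadd : ∀ θ θ' : T → ι → ℝ, ∀ t, g (θ + θ') t = g θ t + g θ' t)
    (hconst : ∀ (c : ℝ) (t : T), g (fun _ _ => c) t = 0) (τ : T)
    (hstop : ∀ (θ : T → ι → ℝ) (t : T),
      g (fun s i => θ s i * (if τ ≤ s then (1:ℝ) else 0)) t =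
        (g θ t - g θ τ) * (if τ ≤ t then (1:ℝ) else 0))
    (b c : ℝ) (θ : T → ι → ℝ) (t : T) :
    g (fun s i => b + (θ s i - c) * (if τ ≤ s then (1:ℝ) else 0)) t =
      (g θ t - g θ τ) * (if τ ≤ t then (1:ℝ) else 0) := by
  have hsplit : (fun s i => b + (θ s i - c) * (if τ ≤ s then (1:ℝ) else 0)) =
      (fun _ _ => b) + (fun s i => θ s i * (if τ ≤ s then (1:ℝ) else 0)) +
        (fun s i => (fun _ _ => -c : T → ι → ℝ) s i * (if τ ≤ s then (1:ℝ) else 0)) := by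
    funext s i
    simp only [Pi.add_apply]
    ring
  rw [hsplit, hadd, hadd, hconst, hstop, hstop, hconst, hconst]
  ring

end Concatenation

theorem stmt14_general (d : ℕ) (b τ : ℝ) (hτ : 0 ≤ τ)
    (μ : ℝ → Fin d → ℝ) (hμ : ∀ t, ∑ i, μ t i = 1)
    (g : (ℝ → Fin d → ℝ) → ℝ → ℝ)
    (hadd : ∀ θ θ' : ℝ → Fin d → ℝ, ∀ t, g (θ + θ') t = g θ t + g θ' t)
    (hconst : ∀ (c : ℝ) (t : ℝ), g (fun _ _ => c) t = 0)
    (hstop : ∀ (θ : ℝ → Fin d → ℝ) (t : ℝ),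
      g (fun s i => θ s i * (if τ ≤ s then (1:ℝ) else 0)) t =
        (g θ t - g θ τ) * (if τ ≤ t then (1:ℝ) else 0))
    (φ : ℝ → Fin d → ℝ)
    (hφ : ∀ t, ∑ i, φ t i * μ t i = (∑ i, φ 0 i * μ 0 i) + g φ t)
    (ψ : ℝ → Fin d → ℝ)
    (hψ : ∀ t i, ψ t i = b + (φ t i - ∑ j, φ τ j * μ τ j) * (if τ ≤ t then (1:ℝ) else 0)) :
    (∀ t, ∑ i, ψ t i * μ t i = (∑ i, ψ 0 i * μ 0 i) + g ψ t) ∧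
    (∀ t, ∑ i, ψ t i * μ t i =
      b + ((∑ i, φ t i * μ t i) - ∑ i, φ τ i * μ τ i) * (if τ ≤ t then (1:ℝ) else 0)) := by
  obtain rfl : ψ = fun t i =>
      b + (φ t i - ∑ j, φ τ j * μ τ j) * (if τ ≤ t then (1:ℝ) else 0) := funext₂ hψ
  have hwealth t := sum_affine_mul_of_sum_eq_one (hμ t) b (∑ j, φ τ j * μ τ j)
    (if τ ≤ t then (1:ℝ) else 0) (x := φ t)
  have hwealth_zero : ∑ i, (b + (φ 0 i - ∑ j, φ τ j * μ τ j) *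
      (if τ ≤ 0 then (1:ℝ) else 0)) * μ 0 i = b := by
    rw [hwealth 0]
    rcases hτ.eq_or_lt with rfl | hpos
    · simp
    · simp [hpos.not_ge]
  refine ⟨fun t => ?_, hwealth⟩
  rw [hwealth t, hwealth_zero, gains_concat_eq g hadd hconst τ hstop, hφ t, hφ τ]
  ring

/-- Concatenation of trading strategies (pathwise formulation). Let `μ` take values in `Δᵈ`
(coordinates summing to 1), and let `g θ t` denote the gains-from-trade `∫₀ᵗ ∑ᵢ θᵢ dμᵢ`
(an abstract stochastic-integral functional, assumed additive, homogeneous, vanishing on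
constant-in-`i` integrands since `∑ᵢ dμᵢ = 0`, and compatible with stopping at `τ`). If `φ`
is self-financing, then `ψᵢ(t) = b + (φᵢ(t) − V^φ(τ)) 1_{t ≥ τ}` is self-financing as well,
and its wealth satisfies `V^ψ(t) = b + (V^φ(t) − V^φ(τ)) 1_{t ≥ τ}`. -/
theorem stmt14 (d : ℕ) (b τ : ℝ) (hτ : 0 ≤ τ)
    (μ : ℝ → Fin d → ℝ) (hμ : ∀ t, ∑ i, μ t i = 1)
    (g : (ℝ → Fin d → ℝ) → ℝ → ℝ)
    (hadd : ∀ θ θ' : ℝ → Fin d → ℝ, ∀ t, g (θ + θ') t = g θ t + g θ' t)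
    (hsmul : ∀ (c : ℝ) (θ : ℝ → Fin d → ℝ) (t : ℝ), g (c • θ) t = c * g θ t)
    (hconst : ∀ (c : ℝ) (t : ℝ), g (fun _ _ => c) t = 0)
    (hstop : ∀ (θ : ℝ → Fin d → ℝ) (t : ℝ),
      g (fun s i => θ s i * (if τ ≤ s then (1:ℝ) else 0)) t =
        (g θ t - g θ τ) * (if τ ≤ t then (1:ℝ) else 0))
    (φ : ℝ → Fin d → ℝ)
    (hφ : ∀ t, ∑ i, φ t i * μ t i = (∑ i, φ 0 i * μ 0 i) + g φ t)
    (ψ : ℝ → Fin d → ℝ)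
    (hψ : ∀ t i, ψ t i = b + (φ t i - ∑ j, φ τ j * μ τ j) * (if τ ≤ t then (1:ℝ) else 0)) :
    (∀ t, ∑ i, ψ t i * μ t i = (∑ i, ψ 0 i * μ 0 i) + g ψ t) ∧
    (∀ t, ∑ i, ψ t i * μ t i =
      b + ((∑ i, φ t i * μ t i) - ∑ i, φ τ i * μ τ i) * (if τ ≤ t then (1:ℝ) else 0)) :=
  stmt14_general d b τ hτ μ hμ g hadd hconst hstop φ hφ ψ hψ
end

section
/- Suppose ν₁ is a continuous nonnegative semimartingale with ν₁(0) ∈ (0,1), ν₁(t) ≥ ν₁(0)/2 for all t (stopped version), and quadratic variation ⟨ν₁⟩(t) ≥ η t for some η > 0 on [0, D*], where D* = inf{t : ν₁(t) ≤ ν₁(0)/2}. For q > 1 define Z(t) = ν₁(t)^q exp(−(1/2)q(q−1)∫₀ᵗ ν₁(s)^{−2} d⟨ν₁⟩(s)). If on the event {D* ≤ T} one evaluates V(T) := 1 + ν₁(0)^q − Z(T), then V(T) ≥ 1 + ν₁(0)^q − (ν₁(0)/2)^q > 1; and on {D* > T}, V(T) ≥ 1 + ν₁(0)^q − exp(−(η/2)q(q−1)T)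 > 1 provided exp(−(η/2)(q−1)T) < ν₁(0). -/
/-! The compensating factor `exp (-(1/2) q (q-1) A T)` of `Z` is at most `1`, and at most
`exp (-(η/2) q (q-1) T)` before `D*`. Hence `Z(T) ≤ (ν(0)/2)^q < ν(0)^q` once `ν` has been
stopped at `ν(0)/2`, while before `D*` we get `Z(T) ≤ exp (-(η/2) q (q-1) T)`, which is
`exp (-(η/2) (q-1) T) ^ q < ν(0)^q`. -/

open Real

lemma rpow_mul_exp_le_rpow {x q s : ℝ} (hx : 0 ≤ x) (hs : s ≤ 0) : x ^ q * exp s ≤ x ^ q :=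
  mul_le_of_le_one_right (rpow_nonneg hx q) (exp_le_one_iff.mpr hs)

lemma rpow_mul_exp_le_exp {x q s t : ℝ} (hx₀ : 0 ≤ x) (hx₁ : x ≤ 1) (hq : 0 ≤ q) (hst : s ≤ t) :
    x ^ q * exp s ≤ exp t :=
  calc x ^ q * exp s ≤ 1 * exp t :=
        mul_le_mul (rpow_le_one hx₀ hx₁ hq) (exp_le_exp.mpr hst) (exp_pos s).le zero_le_one
    _ = exp t := one_mul _

lemma exp_mul_lt_rpow {a x q : ℝ} (hq : 0 < q) (h : exp a < x) : exp (a * q) < x ^ q := by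
  rw [exp_mul]
  exact rpow_lt_rpow (exp_pos a).le h hq

theorem stmt15_general (T η q ν0 : ℝ) (hq : 1 < q)
    (ν A : ℝ → ℝ) (Dstar : ℝ)
    (hν0mem : ν0 ∈ Set.Ioo (0 : ℝ) 1)
    (hνT : ν T ∈ Set.Icc (0 : ℝ) 1)
    (hA0 : 0 ≤ A T)
    (hstop : Dstar ≤ T → ν T = ν0 / 2)
    (hAT : T < Dstar → η * T ≤ A T) :
    (Dstar ≤ T →
      1 + ν0 ^ q - ν T ^ q * Real.exp (-(1/2) * q * (q-1) * A T) ≥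
        1 + ν0 ^ q - (ν0 / 2) ^ q ∧
      1 + ν0 ^ q - (ν0 / 2) ^ q > 1) ∧
    (T < Dstar → Real.exp (-(η/2) * (q-1) * T) < ν0 →
      1 + ν0 ^ q - ν T ^ q * Real.exp (-(1/2) * q * (q-1) * A T) ≥
        1 + ν0 ^ q - Real.exp (-(η/2) * q * (q-1) * T) ∧
      1 + ν0 ^ q - Real.exp (-(η/2) * q * (q-1) * T) > 1) := by
  have hν0 : 0 < ν0 := hν0mem.1
  have hq₀ : 0 < q := by linarith
  have hqq : 0 ≤ q * (q - 1) := by nlinarith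
  refine ⟨fun hD => ?_, fun hD hexp => ?_⟩
  · have hZ := rpow_mul_exp_le_rpow (q := q) (half_pos hν0).le
      (show -(1/2) * q * (q-1) * A T ≤ 0 by nlinarith)
    have hlt : (ν0 / 2) ^ q < ν0 ^ q := rpow_lt_rpow (half_pos hν0).le (half_lt_self hν0) hq₀
    rw [hstop hD]
    constructor <;> linarith
  · have hZ := rpow_mul_exp_le_exp hνT.1 hνT.2 hq₀.le
      (show -(1/2) * q * (q-1) * A T ≤ -(η/2) * q * (q-1) * T by nlinarith [hAT hD])
    have hlt := exp_mul_lt_rpow hq₀ hexp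
    rw [show -(η/2) * (q-1) * T * q = -(η/2) * q * (q-1) * T by ring] at hlt
    constructor <;> linarith

/-- Key quantitative estimate for strong relative arbitrage when one asset has sufficient
variation. Here `ν` is the (stopped) first market weight, `A(t) = ∫₀ᵗ ν(s)⁻² d⟨ν⟩(s)`,
`D*` the first time `ν` drops to `ν(0)/2`, and
`Z(T) = ν(T)^q exp(−(1/2)q(q−1)A(T))`, `V(T) = 1 + ν(0)^q − Z(T)`. On `{D* ≤ T}` one has
`V(T) ≥ 1 + ν(0)^q − (ν(0)/2)^q > 1`; on `{D* > T}`, if `exp(−(η/2)(q−1)T) < ν(0)` then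
`V(T) ≥ 1 + ν(0)^q − exp(−(η/2)q(q−1)T) > 1`. -/
theorem stmt15 (T η q ν0 : ℝ) (hT : 0 < T) (hη : 0 < η) (hq : 1 < q)
    (ν A : ℝ → ℝ) (Dstar : ℝ)
    (hν0 : ν 0 = ν0) (hν0mem : ν0 ∈ Set.Ioo (0 : ℝ) 1)
    (hνT : ν T ∈ Set.Icc (0 : ℝ) 1)
    (hA0 : 0 ≤ A T)
    (hstop : Dstar ≤ T → ν T = ν0 / 2)
    (hAT : T < Dstar → η * T ≤ A T) :
    (Dstar ≤ T →
      1 + ν0 ^ q - ν T ^ q * Real.exp (-(1/2) * q * (q-1) * A T) ≥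
        1 + ν0 ^ q - (ν0 / 2) ^ q ∧
      1 + ν0 ^ q - (ν0 / 2) ^ q > 1) ∧
    (T < Dstar → Real.exp (-(η/2) * (q-1) * T) < ν0 →
      1 + ν0 ^ q - ν T ^ q * Real.exp (-(1/2) * q * (q-1) * A T) ≥
        1 + ν0 ^ q - Real.exp (-(η/2) * q * (q-1) * T) ∧
      1 + ν0 ^ q - Real.exp (-(η/2) * q * (q-1) * T) > 1) :=
  stmt15_general T η q ν0 hq ν A Dstar hν0mem hνT hA0 hstop hAT
end

section
/- Let G : Δᵈ → [0, ∞) be continuous with G(μ(0)) > 0, and suppose the trading strategy φ generated additively by G* = G/G(μ(0)) has wealth V(t) = G*(μ(t)) + Γ^{G*}(t), where Γ^{G*} is nondecreasing with Γ^{G*}(0) = 0. If P(Γ^G(T*) > G(μ(0))) = 1 for some T* > 0, then V(0) = 1, V(·) ≥ 0, and P(V(T) > 1) = 1 for every T ≥ T*; i.e., φ is a strong relative arbitrage with respect to the market over [0, T] for all T ≥ T*. -/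
open MeasureTheory

lemma one_lt_div_add_div_of_lt {c g γ : ℝ} (hc : 0 < c) (hg : 0 ≤ g) (hγ : c < γ) :
    1 < g / c + γ / c := by
  have hγc : 1 < γ / c := (one_lt_div hc).mpr hγ
  have hgc : 0 ≤ g / c := div_nonneg hg hc.le
  linarith

theorem stmt19_general {Ω : Type*} [MeasurableSpace Ω] (P : Measure Ω)
    (d : ℕ) (G : (Fin d → ℝ) → ℝ)
    (μ : ℝ → Ω → Fin d → ℝ) (μ0 : Fin d → ℝ)
    (hμ0 : ∀ ω, μ 0 ω = μ0)
    (hsimplex : ∀ t ω, (∀ i, μ t ω i ∈ Set.Icc (0 : ℝ) 1) ∧ ∑ i, μ t ω i = 1)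
    (hGnn : ∀ x : Fin d → ℝ, ((∀ i, x i ∈ Set.Icc (0 : ℝ) 1) ∧ ∑ i, x i = 1) → 0 ≤ G x)
    (hG0 : 0 < G μ0)
    (Γ : ℝ → Ω → ℝ)
    (hΓ0 : ∀ ω, Γ 0 ω = 0)
    (hΓmono : ∀ ω, Monotone (fun t => Γ t ω))
    (Tstar : ℝ)
    (hkey : ∀ᵐ ω ∂P, G μ0 < Γ Tstar ω) :
    (∀ ω, G (μ 0 ω) / G μ0 + Γ 0 ω / G μ0 = 1) ∧
    (∀ t, 0 ≤ t → ∀ ω, 0 ≤ G (μ t ω) / G μ0 + Γ t ω / G μ0) ∧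
    (∀ T, Tstar ≤ T → ∀ᵐ ω ∂P, 1 < G (μ T ω) / G μ0 + Γ T ω / G μ0) := by
  refine ⟨fun ω => ?_, fun t ht ω => ?_, fun T hT => ?_⟩
  · rw [hμ0, hΓ0, zero_div, add_zero, div_self hG0.ne']
  · have hΓnn : 0 ≤ Γ t ω := hΓ0 ω ▸ hΓmono ω ht
    exact add_nonneg (div_nonneg (hGnn _ (hsimplex t ω)) hG0.le) (div_nonneg hΓnn hG0.le)
  · filter_upwards [hkey] with ω hω
    exact one_lt_div_add_div_of_lt hG0 (hGnn _ (hsimplex T ω)) (hω.trans_le (hΓmono ω hT))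

/-- Strong relative arbitrage over sufficiently long horizons: if `G ≥ 0` on the simplex,
`G(μ(0)) > 0`, `Γ^G` is nondecreasing with `Γ^G(0) = 0`, and
`P(Γ^G(T*) > G(μ(0))) = 1`, then the wealth `V(t) = G*(μ(t)) + Γ^{G*}(t)` (with
`G* = G/G(μ(0))`, `Γ^{G*} = Γ^G/G(μ(0))`) of the additively generated strategy satisfies
`V(0) = 1`, `V ≥ 0` on `[0,∞)`, and `P(V(T) > 1) = 1` for every `T ≥ T*`. -/
theorem stmt19 {Ω : Type*} [MeasurableSpace Ω] (P : Measure Ω) [IsProbabilityMeasure P]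
    (d : ℕ) (G : (Fin d → ℝ) → ℝ)
    (μ : ℝ → Ω → Fin d → ℝ) (μ0 : Fin d → ℝ)
    (hμ0 : ∀ ω, μ 0 ω = μ0)
    (hsimplex : ∀ t ω, (∀ i, μ t ω i ∈ Set.Icc (0 : ℝ) 1) ∧ ∑ i, μ t ω i = 1)
    (hGnn : ∀ x : Fin d → ℝ, ((∀ i, x i ∈ Set.Icc (0 : ℝ) 1) ∧ ∑ i, x i = 1) → 0 ≤ G x)
    (hG0 : 0 < G μ0)
    (Γ : ℝ → Ω → ℝ)
    (hΓ0 : ∀ ω, Γ 0 ω = 0)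
    (hΓmono : ∀ ω, Monotone (fun t => Γ t ω))
    (Tstar : ℝ) (hTstar : 0 < Tstar)
    (hkey : ∀ᵐ ω ∂P, G μ0 < Γ Tstar ω) :
    (∀ ω, G (μ 0 ω) / G μ0 + Γ 0 ω / G μ0 = 1) ∧
    (∀ t, 0 ≤ t → ∀ ω, 0 ≤ G (μ t ω) / G μ0 + Γ t ω / G μ0) ∧
    (∀ T, Tstar ≤ T → ∀ᵐ ω ∂P, 1 < G (μ T ω) / G μ0 + Γ T ω / G μ0) :=
  stmt19_general P d G μ μ0 hμ0 hsimplex hGnn hG0 Γ hΓ0 hΓmono Tstar hkey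
end
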